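/- arXiv:0904.1053 — 3 statements merged into one kernel-verified Lean document; each statement's English description precedes it below -/
import Mathlib

section
/- For every real n > 0, ∫_0^∞ ( 1/(e^{2πx} - 1) - 1/(2πx) ) e^{-2πnx} dx = (1/(2π)) ( log n - ψ(1+n) ). -/
open Real MeasureTheory Filter

/-- The digamma function `ψ = Γ'/Γ`. -/
noncomputable def digamma (x : ℝ) : ℝ := deriv Real.Gamma x / Real.Gamma x

/-!
After the substitution `t = 2πx` the integral becomes
`I(n) = ∫₀^∞ (1/(eᵗ - 1) - 1/t) e^{-nt} dt`. Since
`e^{-nt} - e^{-(n+1)t} = (eᵗ - 1) e^{-(n+1)t}`, Frullani's integral gives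
`I(n) - I(n+1) = 1/(n+1) - log((n+1)/n)`, which by `ψ(x+1) = ψ(x) + 1/x` is also the increment
of `log n - ψ(1+n)`. The difference of the two sides is therefore 1-periodic, and it is `O(1/n)`:
the kernel is bounded by `1`, and the log-convexity of `Γ` traps `ψ(1+n)` between `log n` and
`log n + 1/n`. So it vanishes.
-/

open Set Topology

theorem forall_ne_neg_natCast_of_pos {x : ℝ} (hx : 0 < x) : ∀ m : ℕ, x ≠ -m :=
  fun m => by linarith [(m.cast_nonneg : (0 : ℝ) ≤ m)]

theorem digamma_eq_logDeriv : digamma = logDeriv Gamma := rfl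

theorem digamma_add_one {x : ℝ} (hx : ∀ m : ℕ, x ≠ -m) :
    digamma (x + 1) = digamma x + 1 / x := by
  have hx0 : x ≠ 0 := by simpa using hx 0
  have hx1 : ∀ m : ℕ, x + 1 ≠ -m := fun m h => hx (m + 1) (by push_cast; linarith)
  have hshift : Gamma ∘ (· + 1) =ᶠ[𝓝 x] fun y => id y * Gamma y := by
    filter_upwards [eventually_ne_nhds hx0] with y hy using Gamma_add_one hy
  calc digamma (x + 1) = logDeriv (Gamma ∘ (· + 1)) x := by
        rw [logDeriv_comp (g := (· + 1)) (differentiableAt_Gamma hx1)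
          (differentiableAt_id.add_const 1), deriv_add_const, deriv_id'', mul_one,
          digamma_eq_logDeriv]
    _ = logDeriv (fun y => id y * Gamma y) x := (logDeriv_congr_nhds hshift).eq_of_nhds
    _ = digamma x + 1 / x := by
        rw [logDeriv_mul (f := id) x hx0 (Gamma_ne_zero hx) differentiableAt_id
          (differentiableAt_Gamma hx), logDeriv_id, digamma_eq_logDeriv, add_comm]

theorem hasDerivAt_log_comp_Gamma {x : ℝ} (hx : 0 < x) :
    HasDerivAt (log ∘ Gamma) (digamma x) x :=
  (differentiableAt_Gamma (forall_ne_neg_natCast_of_pos hx)).hasDerivAt.log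
    (Gamma_pos_of_pos hx).ne'

theorem slope_log_comp_Gamma {x : ℝ} (hx : 0 < x) : slope (log ∘ Gamma) x (x + 1) = log x := by
  rw [slope_def_field, Function.comp_apply, Function.comp_apply, Gamma_add_one hx.ne',
    log_mul hx.ne' (Gamma_pos_of_pos hx).ne']
  ring

theorem digamma_le_log {x : ℝ} (hx : 0 < x) : digamma x ≤ log x :=
  slope_log_comp_Gamma hx ▸ convexOn_log_Gamma.le_slope_of_hasDerivAt hx
    (mem_Ioi.mpr (by linarith)) (lt_add_one x) (hasDerivAt_log_comp_Gamma hx)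

theorem log_le_digamma_add_one {x : ℝ} (hx : 0 < x) : log x ≤ digamma (x + 1) :=
  slope_log_comp_Gamma hx ▸ convexOn_log_Gamma.slope_le_of_hasDerivAt hx
    (mem_Ioi.mpr (by linarith)) (lt_add_one x) (hasDerivAt_log_comp_Gamma (by linarith))

theorem abs_log_sub_digamma_add_one_le {x : ℝ} (hx : 0 < x) :
    |log x - digamma (x + 1)| ≤ 1 / x := by
  have hψ := digamma_add_one (forall_ne_neg_natCast_of_pos hx)
  rw [abs_sub_comm, abs_le]
  constructor <;> linarith [digamma_le_log hx, log_le_digamma_add_one hx]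

theorem eq_of_tendsto_of_add_one_eq {α : Type*} [TopologicalSpace α] [T2Space α] {f : ℝ → α}
    {c : α} (hf : ∀ y > 0, f (y + 1) = f y) (hlim : Tendsto f atTop (𝓝 c)) {x : ℝ}
    (hx : 0 < x) : f x = c := by
  have hshift : ∀ k : ℕ, f (x + k) = f x := by
    intro k
    induction k with
    | zero => simp
    | succ k ih => rw [Nat.cast_succ, ← add_assoc, hf _ (by positivity), ih]
  have : Tendsto (fun k : ℕ => f (x + k)) atTop (𝓝 c) :=
    hlim.comp (tendsto_atTop_add_const_left _ x tendsto_natCast_atTop_atTop)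
  simp only [hshift] at this
  exact tendsto_nhds_unique tendsto_const_nhds this

noncomputable def digammaKernel (t : ℝ) : ℝ := 1 / (exp t - 1) - 1 / t

theorem abs_digammaKernel_le_one {t : ℝ} (ht : 0 < t) : |digammaKernel t| ≤ 1 := by
  have het : t < exp t - 1 := by linarith [add_one_lt_exp ht.ne']
  have hneg : (1 - t) * exp t ≤ 1 := by
    simpa [← exp_add] using
      mul_le_mul_of_nonneg_right (by linarith [add_one_le_exp (-t)] : 1 - t ≤ exp (-t))
        (exp_pos t).le
  rw [digammaKernel, abs_le]
  constructor
  · rw [div_sub_div _ _ (by linarith) ht.ne', le_div_iff₀ (by nlinarith)]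
    nlinarith
  · linarith [one_div_le_one_div_of_le ht het.le, one_div_pos.mpr ht]

theorem continuousOn_digammaKernel : ContinuousOn digammaKernel (Ioi 0) := by
  refine (continuousOn_const.div (continuous_exp.continuousOn.sub continuousOn_const) ?_).sub
    (continuousOn_const.div continuousOn_id fun t ht => ne_of_gt ht)
  intro t (ht : 0 < t)
  simp only [Pi.sub_apply]
  linarith [add_one_lt_exp ht.ne']

theorem norm_digammaKernel_mul_exp_le {t : ℝ} (ht : 0 < t) (c : ℝ) :
    ‖digammaKernel t * exp (-(c * t))‖ ≤ exp (-(c * t)) := by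
  rw [norm_mul, norm_of_nonneg (exp_pos _).le]
  exact mul_le_of_le_one_left (exp_pos _).le (abs_digammaKernel_le_one ht)

theorem integral_exp_neg_mul_Ioi {c : ℝ} (hc : 0 < c) :
    ∫ t in Ioi 0, exp (-(c * t)) = 1 / c := by
  simpa [neg_mul, neg_div_neg_eq] using integral_exp_mul_Ioi (neg_lt_zero.mpr hc) 0

theorem integrableOn_exp_neg_mul_Ioi {c : ℝ} (hc : 0 < c) :
    IntegrableOn (fun t => exp (-(c * t))) (Ioi 0) := by
  simpa only [neg_mul] using exp_neg_integrableOn_Ioi 0 hc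

theorem integrableOn_digammaKernel_mul_exp {c : ℝ} (hc : 0 < c) :
    IntegrableOn (fun t => digammaKernel t * exp (-(c * t))) (Ioi 0) := by
  refine Integrable.mono' (integrableOn_exp_neg_mul_Ioi hc) ?_ ?_
  · exact (continuousOn_digammaKernel.mul (by fun_prop)).aestronglyMeasurable measurableSet_Ioi
  · filter_upwards [ae_restrict_mem measurableSet_Ioi] with t ht
    exact norm_digammaKernel_mul_exp_le ht c

theorem abs_integral_digammaKernel_mul_exp_le {c : ℝ} (hc : 0 < c) :
    |∫ t in Ioi 0, digammaKernel t * exp (-(c * t))| ≤ 1 / c := by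
  rw [← integral_exp_neg_mul_Ioi hc, ← norm_eq_abs]
  refine norm_integral_le_of_norm_le (integrableOn_exp_neg_mul_Ioi hc) ?_
  filter_upwards [ae_restrict_mem measurableSet_Ioi] with t ht
  exact norm_digammaKernel_mul_exp_le ht c

theorem digammaKernel_mul_exp_sub {t : ℝ} (ht : 0 < t) (n : ℝ) :
    digammaKernel t * exp (-(n * t)) - digammaKernel t * exp (-((n + 1) * t))
      = exp (-((n + 1) * t)) - t⁻¹ • (exp (-(n * t)) - exp (-((n + 1) * t))) := by
  have hE : exp t - 1 ≠ 0 := by linarith [add_one_lt_exp ht.ne']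
  have hshift : exp (-(n * t)) = exp (-((n + 1) * t)) * exp t := by rw [← exp_add]; ring_nf
  rw [digammaKernel, hshift, smul_eq_mul]
  field_simp

theorem integral_digammaKernel_mul_exp_sub_succ {n : ℝ} (hn : 0 < n) :
    (∫ t in Ioi 0, digammaKernel t * exp (-(n * t)))
        - ∫ t in Ioi 0, digammaKernel t * exp (-((n + 1) * t))
      = 1 / (n + 1) - log ((n + 1) / n) := by
  have hn1 : 0 < n + 1 := by linarith
  have hIn := integrableOn_digammaKernel_mul_exp hn
  have hIn1 := integrableOn_digammaKernel_mul_exp hn1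
  have hexp := integrableOn_exp_neg_mul_Ioi hn1
  have hdiff : ∀ t ∈ Ioi (0 : ℝ), digammaKernel t * exp (-(n * t))
      - digammaKernel t * exp (-((n + 1) * t))
      = exp (-((n + 1) * t)) - t⁻¹ • (exp (-(n * t)) - exp (-((n + 1) * t))) :=
    fun t ht => digammaKernel_mul_exp_sub ht n
  -- Frullani's theorem needs integrability, which `hdiff` supplies for free
  have hfrullani : IntegrableOn (fun t : ℝ => t⁻¹ • (exp (-(n * t)) - exp (-((n + 1) * t))))
      (Ioi 0) :=
    (hexp.sub (hIn.sub hIn1)).congr_fun (fun t ht => by simp [hdiff t ht]) measurableSet_Ioi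
  have hF : ∫ t in Ioi 0, t⁻¹ • (exp (-(n * t)) - exp (-((n + 1) * t)))
      = log ((n + 1) / n) := by
    have hL : Tendsto (fun x : ℝ => exp (-x)) (𝓝[>] 0) (𝓝 1) := by
      simpa using ((by fun_prop : Continuous fun x : ℝ => exp (-x)).tendsto 0).mono_left
        nhdsWithin_le_nhds
    simpa using Frullani.integral_Ioi_eq
      ((by fun_prop : Continuous fun x : ℝ => exp (-x)).locallyIntegrable.locallyIntegrableOn _)
      hn hn1 hL tendsto_exp_neg_atTop_nhds_zero hfrullani
  rw [← integral_sub hIn hIn1, setIntegral_congr_fun measurableSet_Ioi hdiff,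
    integral_sub hexp hfrullani, integral_exp_neg_mul_Ioi hn1, hF]

theorem tendsto_integral_digammaKernel_mul_exp_sub_log_add_digamma :
    Tendsto (fun m => (∫ t in Ioi 0, digammaKernel t * exp (-(m * t)))
      - (log m - digamma (1 + m))) atTop (𝓝 0) := by
  have hbound : Tendsto (fun m : ℝ => 2 / m) atTop (𝓝 0) :=
    tendsto_const_nhds.div_atTop tendsto_id
  refine squeeze_zero_norm' ?_ hbound
  filter_upwards [eventually_gt_atTop 0] with m hm
  rw [add_comm 1 m, norm_eq_abs]
  calc _ ≤ |∫ t in Ioi 0, digammaKernel t * exp (-(m * t))| + |log m - digamma (m + 1)| :=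
        abs_sub _ _
    _ ≤ 1 / m + 1 / m :=
        add_le_add (abs_integral_digammaKernel_mul_exp_le hm) (abs_log_sub_digamma_add_one_le hm)
    _ = 2 / m := by ring

theorem integral_digammaKernel_mul_exp {n : ℝ} (hn : 0 < n) :
    ∫ t in Ioi 0, digammaKernel t * exp (-(n * t)) = log n - digamma (1 + n) := by
  refine sub_eq_zero.mp (eq_of_tendsto_of_add_one_eq (fun m hm => ?_)
    tendsto_integral_digammaKernel_mul_exp_sub_log_add_digamma hn)
  have hI := integral_digammaKernel_mul_exp_sub_succ hm
  have hψ := digamma_add_one (forall_ne_neg_natCast_of_pos (by positivity : 0 < 1 + m))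
  rw [log_div (by positivity) hm.ne'] at hI
  rw [show 1 + (m + 1) = 1 + m + 1 by ring, hψ, add_comm 1 m]
  linarith

theorem integral_exp_digamma (n : ℝ) (hn : 0 < n) :
    ∫ x in Set.Ioi (0 : ℝ),
        (1 / (Real.exp (2 * π * x) - 1) - 1 / (2 * π * x)) * Real.exp (-(2 * π * n * x))
      = (1 / (2 * π)) * (Real.log n - digamma (1 + n)) := by
  have hscale := integral_comp_mul_left_Ioi (fun t => digammaKernel t * exp (-(n * t))) 0
    (by positivity : 0 < 2 * π)
  rw [mul_zero, integral_digammaKernel_mul_exp hn, smul_eq_mul, ← one_div] at hscale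
  rw [← hscale]
  congr with x
  rw [digammaKernel]
  ring_nf
end

section
/- For every real α > 0, γ - log(2πα) = ∫_0^∞ ( 2π/(e^{2πt} - 1) - e^{-t/α}/t ) dt, where γ is Euler's constant. -/
open Real MeasureTheory Filter

/-!
For `t > 0` the function `H t = log (1 - exp (-c t)) - exp (-t / α) log t` has derivative
`c / (exp (c t) - 1) - exp (-t / α) / t + α⁻¹ exp (-t / α) log t`, and `H t → log c` as `t → 0⁺`,
`H t → 0` as `t → ∞`. Integrating `H'` over `(0, ∞)` and using
`∫₀^∞ exp (-t / α) log t dt = α (log α - γ)`, which the substitution `t = α s` reduces to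
`Γ'(1) = ∫₀^∞ exp (-s) log s ds = -γ`, gives the formula for every `c > 0`; the theorem is `c = 2π`.
-/

open Set Topology Asymptotics

theorem integral_Ioi_of_hasDerivAt_of_tendsto_nhdsGT {E : Type*} [NormedAddCommGroup E]
    [NormedSpace ℝ E] [CompleteSpace E] {f f' : ℝ → E} {a : ℝ} {l m : E}
    (hderiv : ∀ x ∈ Ioi a, HasDerivAt f (f' x) x) (f'int : IntegrableOn f' (Ioi a))
    (hfa : Tendsto f (𝓝[>] a) (𝓝 l)) (hf : Tendsto f atTop (𝓝 m)) :
    ∫ x in Ioi a, f' x = m - l := by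
  classical
  have hupdate : ∀ x ∈ Ioi a, Function.update f a l =ᶠ[𝓝 x] f := fun x hx => by
    filter_upwards [eventually_ne_nhds (ne_of_gt hx)] with y hy using Function.update_of_ne hy _ _
  have := integral_Ioi_of_hasDerivAt_of_tendsto (f := Function.update f a l)
    (by rwa [continuousWithinAt_update_same, Ici_sdiff_left])
    (fun x hx => (hderiv x hx).congr_of_eventuallyEq (hupdate x hx)) f'int
    (hf.congr' <| by
      filter_upwards [eventually_gt_atTop a] with x hx using (Function.update_of_ne hx.ne' _ _).symm)
  rwa [Function.update_self] at this

theorem integral_exp_neg_mul_log :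
    ∫ t in Ioi (0 : ℝ), exp (-t) * log t = -eulerMascheroniConstant := by
  have hGamma : HasDerivAt Complex.Gamma
      (∫ t : ℝ in Ioi 0, (t : ℂ) ^ ((1 : ℂ) - 1) * (log t * exp (-t))) 1 := by
    refine (Complex.hasDerivAt_GammaIntegral (by norm_num)).congr_of_eventuallyEq ?_
    filter_upwards [Complex.continuous_re.isOpen_preimage _ isOpen_Ioi |>.mem_nhds
      (show (1 : ℂ).re ∈ Ioi 0 by norm_num)] with s hs
    exact Complex.Gamma_eq_integral hs
  have hint : (∫ t : ℝ in Ioi 0, (t : ℂ) ^ ((1 : ℂ) - 1) * (log t * exp (-t)))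
      = ((∫ t in Ioi (0 : ℝ), exp (-t) * log t : ℝ) : ℂ) := by
    rw [← integral_complex_ofReal]
    refine setIntegral_congr_fun measurableSet_Ioi fun t _ => ?_
    rw [sub_self, Complex.cpow_zero, one_mul]
    push_cast
    ring
  rw [hint] at hGamma
  exact_mod_cast hGamma.unique Complex.hasDerivAt_Gamma_one

theorem integrableOn_exp_neg_mul_log :
    IntegrableOn (fun t => exp (-t) * log t) (Ioi 0) :=
  Integrable.of_integral_ne_zero <| by
    rw [integral_exp_neg_mul_log, neg_ne_zero]
    exact (one_half_pos.trans one_half_lt_eulerMascheroniConstant).ne'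

theorem integrableOn_exp_neg_Ioi_zero : IntegrableOn (fun s => exp (-s)) (Ioi 0) := by
  simpa using exp_neg_integrableOn_Ioi 0 one_pos

theorem exp_neg_mul_div_mul_log_mul {α s : ℝ} (hα : 0 < α) (hs : 0 < s) :
    exp (-(α * s / α)) * log (α * s) = log α * exp (-s) + exp (-s) * log s := by
  rw [mul_div_cancel_left₀ s hα.ne', log_mul hα.ne' hs.ne']
  ring

theorem integrableOn_exp_neg_div_mul_log {α : ℝ} (hα : 0 < α) :
    IntegrableOn (fun t => exp (-(t / α)) * log t) (Ioi 0) := by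
  rw [← mul_zero α, ← integrableOn_Ioi_comp_mul_left_iff _ _ hα]
  refine IntegrableOn.congr_fun ?_ (fun s hs => (exp_neg_mul_div_mul_log_mul hα hs).symm)
    measurableSet_Ioi
  exact (integrableOn_exp_neg_Ioi_zero.const_mul _).add integrableOn_exp_neg_mul_log

theorem integral_exp_neg_div_mul_log {α : ℝ} (hα : 0 < α) :
    ∫ t in Ioi 0, exp (-(t / α)) * log t = α * (log α - eulerMascheroniConstant) := by
  rw [← mul_zero α, ← integral_comp_mul_left_Ioi' _ _ hα, smul_eq_mul,
    setIntegral_congr_fun measurableSet_Ioi fun s hs => exp_neg_mul_div_mul_log_mul hα hs,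
    integral_add (integrableOn_exp_neg_Ioi_zero.const_mul _) integrableOn_exp_neg_mul_log,
    integral_const_mul, integral_exp_neg_Ioi_zero, integral_exp_neg_mul_log]
  ring

theorem one_sub_exp_neg_ne_zero {x : ℝ} (hx : x ≠ 0) : 1 - exp (-x) ≠ 0 :=
  sub_ne_zero.2 fun h => hx (neg_eq_zero.1 ((exp_eq_one_iff _).1 h.symm))

theorem hasDerivAt_log_one_sub_exp_neg_mul {c t : ℝ} (hct : c * t ≠ 0) :
    HasDerivAt (fun t => log (1 - exp (-(c * t)))) (c / (exp (c * t) - 1)) t := by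
  have hinner : HasDerivAt (fun t => 1 - exp (-(c * t))) (exp (-(c * t)) * c) t := by
    simpa using (((hasDerivAt_id t).const_mul c).neg.exp).const_sub 1
  convert hinner.log (one_sub_exp_neg_ne_zero hct) using 1
  rw [exp_neg]
  have : exp (c * t) ≠ 0 := (exp_pos _).ne'
  field_simp

theorem tendsto_log_one_sub_exp_neg_mul_atTop {c : ℝ} (hc : 0 < c) :
    Tendsto (fun t => log (1 - exp (-(c * t)))) atTop (𝓝 0) := by
  have hexp : Tendsto (fun t => 1 - exp (-(c * t))) atTop (𝓝 1) := by
    simpa using (tendsto_exp_neg_atTop_nhds_zero.comp (tendsto_id.const_mul_atTop hc)).const_sub 1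
  simpa [Function.comp_def] using (continuousAt_log one_ne_zero).tendsto.comp hexp

theorem tendsto_log_one_sub_exp_neg_mul_sub_log {c : ℝ} (hc : c ≠ 0) :
    Tendsto (fun t => log (1 - exp (-(c * t))) - log t) (𝓝[>] 0) (𝓝 (log c)) := by
  have hderiv : HasDerivAt (fun t => 1 - exp (-(c * t))) c 0 := by
    simpa using (((hasDerivAt_id (0 : ℝ)).const_mul c).neg.exp).const_sub 1
  have hslope : Tendsto (fun t => (1 - exp (-(c * t))) / t) (𝓝[>] 0) (𝓝 c) := by
    simpa [div_eq_inv_mul] using hderiv.tendsto_slope_zero_right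
  refine ((continuousAt_log hc).tendsto.comp hslope).congr' ?_
  filter_upwards [self_mem_nhdsWithin] with t (ht : 0 < t)
  exact log_div (one_sub_exp_neg_ne_zero (mul_ne_zero hc ht.ne')) ht.ne'

theorem hasDerivAt_exp_neg_div_mul_log {α t : ℝ} (ht : t ≠ 0) :
    HasDerivAt (fun t => exp (-(t / α)) * log t)
      (exp (-(t / α)) / t - α⁻¹ * (exp (-(t / α)) * log t)) t := by
  refine (((hasDerivAt_id' t).div_const α).fun_neg.exp.fun_mul (hasDerivAt_log ht)).congr_deriv ?_
  ring

theorem tendsto_exp_neg_div_mul_log_atTop {α : ℝ} (hα : 0 < α) :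
    Tendsto (fun t => exp (-(t / α)) * log t) atTop (𝓝 0) := by
  have hlin : Tendsto (fun t => t * exp (-(t / α))) atTop (𝓝 0) := by
    have := ((tendsto_pow_mul_exp_neg_atTop_nhds_zero 1).comp
      (tendsto_id.atTop_div_const hα)).const_mul α
    rw [mul_zero] at this
    refine this.congr fun t => ?_
    simp only [Function.comp, id, pow_one]
    field_simp
  have hlog := isLittleO_log_id_atTop.mul_isBigO (isBigO_refl (fun t => exp (-(t / α))) atTop)
  exact (hlog.trans_tendsto hlin).congr fun t => mul_comm _ _

theorem tendsto_exp_neg_div_sub_one_mul_log (α : ℝ) :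
    Tendsto (fun t => (exp (-(t / α)) - 1) * log t) (𝓝[>] 0) (𝓝 0) := by
  have hderiv : HasDerivAt (fun t => exp (-(t / α))) (-α⁻¹) 0 := by
    simpa using ((hasDerivAt_id (0 : ℝ)).div_const α).neg.exp
  have hslope : Tendsto (fun t => (exp (-(t / α)) - 1) / t) (𝓝[>] 0) (𝓝 (-α⁻¹)) := by
    simpa [div_eq_inv_mul] using hderiv.tendsto_slope_zero_right
  have hmul_log : Tendsto (fun t => t * log t) (𝓝[>] 0) (𝓝 0) := by
    simpa using continuous_mul_log.tendsto 0 |>.mono_left nhdsWithin_le_nhds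
  refine (mul_zero (-α⁻¹) ▸ hslope.mul hmul_log).congr' ?_
  filter_upwards [self_mem_nhdsWithin] with t (ht : 0 < t)
  field_simp

theorem inv_sub_inv_exp_sub_one_mem_Icc {u : ℝ} (hu : 0 < u) :
    u⁻¹ - (exp u - 1)⁻¹ ∈ Icc 0 1 := by
  have hle : u ≤ exp u - 1 := by linarith [add_one_le_exp u]
  refine ⟨sub_nonneg.2 (inv_anti₀ hu hle), ?_⟩
  -- `1 - exp (-u) ≤ u`, multiplied by `exp u`
  have hexp : exp u - 1 ≤ u * exp u := by
    nlinarith [add_one_le_exp (-u), exp_pos u, exp_neg u, mul_inv_cancel₀ (exp_pos u).ne']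
  rw [inv_sub_inv hu.ne' (hu.trans_le hle).ne', div_le_one (mul_pos hu (hu.trans_le hle))]
  nlinarith

theorem one_sub_exp_neg_div_mem_Icc {x : ℝ} (hx : 0 < x) : (1 - exp (-x)) / x ∈ Icc 0 1 := by
  rw [mem_Icc, div_le_one hx]
  exact ⟨div_nonneg (sub_nonneg.2 (exp_le_one_iff.2 (neg_nonpos.2 hx.le))) hx.le,
    by linarith [add_one_le_exp (-x)]⟩

theorem abs_div_exp_mul_sub_one_sub_exp_neg_div_div_le {c α t : ℝ} (hc : 0 < c) (hα : 0 < α)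
    (ht : 0 < t) : |c / (exp (c * t) - 1) - exp (-(t / α)) / t| ≤ c + α⁻¹ := by
  obtain ⟨hA₀, hA₁⟩ := one_sub_exp_neg_div_mem_Icc (div_pos ht hα)
  obtain ⟨hB₀, hB₁⟩ := inv_sub_inv_exp_sub_one_mem_Icc (mul_pos hc ht)
  have hsplit : c / (exp (c * t) - 1) - exp (-(t / α)) / t
      = α⁻¹ * ((1 - exp (-(t / α))) / (t / α)) - c * ((c * t)⁻¹ - (exp (c * t) - 1)⁻¹) := by
    field_simp
    ring
  have hA := mul_le_mul_of_nonneg_left hA₁ (inv_nonneg.2 hα.le)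
  have hB := mul_le_mul_of_nonneg_left hB₁ hc.le
  have := mul_nonneg (inv_nonneg.2 hα.le) hA₀
  have := mul_nonneg hc.le hB₀
  rw [hsplit, abs_le]
  constructor <;> linarith

theorem integrableOn_div_exp_mul_sub_one_Ioi {c a : ℝ} (hc : 0 < c) (ha : 0 < a) :
    IntegrableOn (fun t => c / (exp (c * t) - 1)) (Ioi a) := by
  refine integrableOn_Ioi_deriv_of_nonneg ?_
    (fun t ht => hasDerivAt_log_one_sub_exp_neg_mul (mul_pos hc (ha.trans ht)).ne')
    (fun t ht => div_nonneg hc.le (sub_nonneg.2 (one_le_exp (mul_pos hc (ha.trans ht)).le)))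
    (tendsto_log_one_sub_exp_neg_mul_atTop hc)
  exact (hasDerivAt_log_one_sub_exp_neg_mul (mul_pos hc ha).ne').continuousAt.continuousWithinAt

theorem integrableOn_exp_neg_div_div_Ioi {α a : ℝ} (hα : 0 < α) (ha : 0 < a) :
    IntegrableOn (fun t => exp (-(t / α)) / t) (Ioi a) := by
  have hdom : IntegrableOn (fun t => a⁻¹ * exp (-(t / α))) (Ioi a) := by
    refine IntegrableOn.congr_fun ((exp_neg_integrableOn_Ioi a (inv_pos.2 hα)).const_mul a⁻¹)
      (fun t _ => ?_) measurableSet_Ioi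
    rw [neg_mul, inv_mul_eq_div α]
  refine hdom.mono' (Measurable.aestronglyMeasurable (by fun_prop))
    ((ae_restrict_iff' measurableSet_Ioi).2 ?_)
  filter_upwards with t (ht : a < t)
  have := ha.trans ht
  rw [norm_of_nonneg (by positivity), div_eq_inv_mul]
  gcongr

theorem integrableOn_div_exp_mul_sub_one_sub_exp_neg_div_div {c α : ℝ} (hc : 0 < c) (hα : 0 < α) :
    IntegrableOn (fun t => c / (exp (c * t) - 1) - exp (-(t / α)) / t) (Ioi 0) := by
  rw [← Ioc_union_Ioi_eq_Ioi zero_le_one]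
  refine IntegrableOn.union ?_ ((integrableOn_div_exp_mul_sub_one_Ioi hc one_pos).sub
    (integrableOn_exp_neg_div_div_Ioi hα one_pos))
  refine IntegrableOn.of_bound measure_Ioc_lt_top (Measurable.aestronglyMeasurable (by fun_prop))
    (c + α⁻¹) ((ae_restrict_iff' measurableSet_Ioc).2 ?_)
  filter_upwards with t ht
  exact abs_div_exp_mul_sub_one_sub_exp_neg_div_div_le hc hα ht.1

theorem integral_div_exp_mul_sub_one_sub_exp_neg_div_div {c α : ℝ} (hc : 0 < c) (hα : 0 < α) :
    ∫ t in Ioi 0, (c / (exp (c * t) - 1) - exp (-(t / α)) / t)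
      = eulerMascheroniConstant - log (c * α) := by
  have hf := integrableOn_div_exp_mul_sub_one_sub_exp_neg_div_div hc hα
  have hlog := (integrableOn_exp_neg_div_mul_log hα).const_mul α⁻¹
  have hzero : Tendsto (fun t => log (1 - exp (-(c * t))) - exp (-(t / α)) * log t)
      (𝓝[>] 0) (𝓝 (log c)) := by
    simpa using ((tendsto_log_one_sub_exp_neg_mul_sub_log hc.ne').sub
      (tendsto_exp_neg_div_sub_one_mul_log α)).congr fun t => by ring
  have htop : Tendsto (fun t => log (1 - exp (-(c * t))) - exp (-(t / α)) * log t)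
      atTop (𝓝 0) := by
    simpa using (tendsto_log_one_sub_exp_neg_mul_atTop hc).sub
      (tendsto_exp_neg_div_mul_log_atTop hα)
  have hFTC := integral_Ioi_of_hasDerivAt_of_tendsto_nhdsGT
    (f' := fun t => (c / (exp (c * t) - 1) - exp (-(t / α)) / t)
      + α⁻¹ * (exp (-(t / α)) * log t))
    (fun t ht => ((hasDerivAt_log_one_sub_exp_neg_mul (mul_pos hc ht).ne').sub
      (hasDerivAt_exp_neg_div_mul_log ht.ne')).congr_deriv (by ring))
    (hf.add hlog) hzero htop
  rw [integral_add hf hlog, integral_const_mul, integral_exp_neg_div_mul_log hα,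
    inv_mul_cancel_left₀ hα.ne'] at hFTC
  rw [log_mul hc.ne' hα.ne']
  linarith

theorem eulerMascheroni_sub_log_integral (α : ℝ) (hα : 0 < α) :
    Real.eulerMascheroniConstant - Real.log (2 * π * α)
      = ∫ t in Set.Ioi (0 : ℝ),
          (2 * π / (Real.exp (2 * π * t) - 1) - Real.exp (-(t / α)) / t) :=
  (integral_div_exp_mul_sub_one_sub_exp_neg_div_div two_pi_pos hα).symm
end

section
/- lim_{t→∞} e^t Γ(t+1) / ( t^t √(t+1) ) = √(2π), where t ranges over positive reals. -/
/-!
Log-convexity of `Γ` together with `Γ (s + 1) = s Γ s` gives Wendel's bound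
`Γ (s + x) ≤ Γ s * s ^ x` for `0 ≤ x ≤ 1`. Applied upwards from `n = ⌊t⌋₊` and downwards from `t`,
it pins `Γ (t + 1)` to `n! * t ^ (t - n)` up to a factor in `[1, (n + 1) / t]`. Writing `n!` through
Stirling's sequence `n! / (√(2n) (n / e) ^ n) → √π`, the quotient becomes a product of four factors
tending to `√π`, `1`, `√2` and `1`; for the last one, `e ^ (t - n) (n / t) ^ n`, both bounds come
from `1 + y ≤ e ^ y`.
-/

open Real Filter Topology
open scoped Nat

namespace Real

theorem Gamma_add_le_mul_rpow {s x : ℝ} (hs : 0 < s) (hx₀ : 0 ≤ x) (hx₁ : x ≤ 1) :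
    Gamma (s + x) ≤ Gamma s * s ^ x := by
  have hΓ := Gamma_pos_of_pos hs
  have hconv := convexOn_log_Gamma.2 (Set.mem_Ioi.2 hs) (Set.mem_Ioi.2 (by linarith : 0 < s + 1))
    (sub_nonneg.2 hx₁) hx₀ (sub_add_cancel 1 x)
  simp only [Function.comp_apply, smul_eq_mul] at hconv
  rw [show (1 - x) * s + x * (s + 1) = s + x by ring, Gamma_add_one hs.ne',
    log_mul hs.ne' hΓ.ne'] at hconv
  calc Gamma (s + x) = exp (log (Gamma (s + x))) :=
        (exp_log (Gamma_pos_of_pos (by linarith))).symm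
    _ ≤ exp (log (Gamma s) + x * log s) := exp_le_exp.2 (by linarith)
    _ = Gamma s * s ^ x := by rw [exp_add, exp_log hΓ, rpow_def_of_pos hs, mul_comm x]

theorem Gamma_add_one_mul_rpow_le {s u : ℝ} (hu : 0 < u) (hsu : s ≤ u) (hus : u ≤ s + 1) :
    Gamma (s + 1) * u ^ (u - s) ≤ Gamma (u + 1) := by
  have h := Gamma_add_le_mul_rpow hu (x := s + 1 - u) (by linarith) (by linarith)
  rw [add_sub_cancel] at h
  calc Gamma (s + 1) * u ^ (u - s) ≤ Gamma u * u ^ (s + 1 - u) * u ^ (u - s) := by gcongr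
    _ = Gamma (u + 1) := by
      rw [mul_assoc, ← rpow_add hu, show s + 1 - u + (u - s) = 1 by ring, rpow_one,
        Gamma_add_one hu.ne', mul_comm]

theorem Gamma_add_one_le_mul_rpow {s u : ℝ} (hu : 0 < u) (hsu : s ≤ u) (hus : u ≤ s + 1) :
    Gamma (u + 1) ≤ Gamma (s + 1) * u ^ (u - s) * ((s + 1) / u) := by
  have hs : 0 < s + 1 := by linarith
  have h := Gamma_add_le_mul_rpow hs (x := u - s) (by linarith) (by linarith)
  rw [show s + 1 + (u - s) = u + 1 by ring] at h
  calc Gamma (u + 1) ≤ Gamma (s + 1) * (s + 1) ^ (u - s) := h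
    _ = Gamma (s + 1) * (u ^ (u - s) * ((s + 1) / u) ^ (u - s)) := by
      rw [div_rpow hs.le hu.le, mul_div_cancel₀ _ (rpow_pos_of_pos hu _).ne']
    _ ≤ Gamma (s + 1) * (u ^ (u - s) * ((s + 1) / u)) := by
      gcongr
      exact rpow_le_self_of_one_le ((one_le_div hu).2 hus) (by linarith)
    _ = Gamma (s + 1) * u ^ (u - s) * ((s + 1) / u) := by ring

end Real

theorem one_le_exp_sub_mul_div_pow {n : ℕ} {t : ℝ} (hn : 0 < n) (hnt : n ≤ t) :
    1 ≤ exp (t - n) * (n / t) ^ n := by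
  have hn' : (0 : ℝ) < n := Nat.cast_pos.2 hn
  have ht : 0 < t := hn'.trans_le hnt
  have h : (t / n) ^ n ≤ exp (t - n) :=
    calc (t / n) ^ n ≤ exp (t / n - 1) ^ n :=
          pow_le_pow_left₀ (by positivity) (by linarith [add_one_le_exp (t / n - 1)]) n
      _ = exp (t - n) := by rw [← exp_nat_mul]; congr 1; field_simp
  rwa [← inv_div, inv_pow, ← div_eq_mul_inv, one_le_div (by positivity)]

theorem exp_sub_mul_div_pow_le {n : ℕ} {t : ℝ} (hn : 0 < n) (hnt : n ≤ t) :
    exp (t - n) * (n / t) ^ n ≤ exp ((t - n) ^ 2 / t) := by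
  have ht : 0 < t := (Nat.cast_pos.2 hn).trans_le hnt
  calc exp (t - n) * (n / t) ^ n ≤ exp (t - n) * exp (n / t - 1) ^ n := by
        gcongr
        linarith [add_one_le_exp (n / t - 1)]
    _ = exp ((t - n) ^ 2 / t) := by
      rw [← exp_nat_mul, ← exp_add]
      congr 1
      field_simp
      ring

theorem exp_mul_Gamma_div_rpow_mul_sqrt_eq {n : ℕ} {t : ℝ} (hn : 0 < n) (ht : 0 < t) :
    exp t * Gamma (t + 1) / (t ^ t * √(t + 1)) =
      Stirling.stirlingSeq n * (Gamma (t + 1) / (n ! * t ^ (t - n))) *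
        √(2 * n / (t + 1)) * (exp (t - n) * (n / t) ^ n) := by
  have hn' : (0 : ℝ) < n := Nat.cast_pos.2 hn
  rw [Stirling.stirlingSeq, rpow_sub ht, rpow_natCast, sqrt_div (by positivity), exp_sub,
    div_pow, div_pow, exp_one_pow]
  have : (0 : ℝ) < n ! := Nat.cast_pos.2 (Nat.factorial_pos n)
  field_simp

theorem Gamma_add_one_div_factorial_floor_mul_rpow_mem_Icc {t : ℝ} (ht : 1 ≤ t) :
    Gamma (t + 1) / (⌊t⌋₊ ! * t ^ (t - ⌊t⌋₊)) ∈ Set.Icc 1 (1 + t⁻¹) := by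
  have hnt : (⌊t⌋₊ : ℝ) ≤ t := Nat.floor_le (by linarith)
  have htn : t ≤ ⌊t⌋₊ + 1 := (Nat.lt_floor_add_one t).le
  have hpos : (0 : ℝ) < ⌊t⌋₊ ! * t ^ (t - ⌊t⌋₊) := by positivity
  rw [Set.mem_Icc, one_le_div hpos, div_le_iff₀ hpos, ← Gamma_nat_eq_factorial]
  refine ⟨Gamma_add_one_mul_rpow_le (by linarith) hnt htn, ?_⟩
  calc Gamma (t + 1) ≤ Gamma (⌊t⌋₊ + 1) * t ^ (t - ⌊t⌋₊) * ((⌊t⌋₊ + 1) / t) :=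
        Gamma_add_one_le_mul_rpow (by linarith) hnt htn
    _ ≤ (1 + t⁻¹) * (Gamma (⌊t⌋₊ + 1) * t ^ (t - ⌊t⌋₊)) := by
        rw [mul_comm]
        refine mul_le_mul_of_nonneg_right ?_ (by positivity)
        rw [div_le_iff₀ (by linarith), add_mul, inv_mul_cancel₀ (by linarith)]
        linarith

theorem tendsto_Gamma_div_factorial_floor_mul_rpow :
    Tendsto (fun t : ℝ => Gamma (t + 1) / (⌊t⌋₊ ! * t ^ (t - ⌊t⌋₊))) atTop (𝓝 1) := by
  have hupper : Tendsto (fun t : ℝ => 1 + t⁻¹) atTop (𝓝 1) := by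
    simpa using (tendsto_const_nhds (x := (1 : ℝ))).add tendsto_inv_atTop_zero
  have hbounds := (eventually_ge_atTop 1).mono fun t ht =>
    Gamma_add_one_div_factorial_floor_mul_rpow_mem_Icc ht
  exact tendsto_of_tendsto_of_tendsto_of_le_of_le' (tendsto_const_nhds (x := (1 : ℝ))) hupper
    (hbounds.mono fun _ h => h.1) (hbounds.mono fun _ h => h.2)

theorem tendsto_exp_sub_floor_mul_floor_div_pow :
    Tendsto (fun t : ℝ => exp (t - ⌊t⌋₊) * (⌊t⌋₊ / t) ^ ⌊t⌋₊) atTop (𝓝 1) := by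
  have hupper : Tendsto (fun t : ℝ => exp t⁻¹) atTop (𝓝 1) := by
    rw [← exp_zero]; exact (continuous_exp.tendsto 0).comp tendsto_inv_atTop_zero
  refine tendsto_of_tendsto_of_tendsto_of_le_of_le' (tendsto_const_nhds (x := (1 : ℝ))) hupper
    ?_ ?_ <;> filter_upwards [eventually_ge_atTop 1] with t ht
  · exact one_le_exp_sub_mul_div_pow (Nat.floor_pos.2 ht) (Nat.floor_le (by linarith))
  · have hnt : (⌊t⌋₊ : ℝ) ≤ t := Nat.floor_le (by linarith)
    have htn : t < ⌊t⌋₊ + 1 := Nat.lt_floor_add_one t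
    refine (exp_sub_mul_div_pow_le (Nat.floor_pos.2 ht) hnt).trans ?_
    rw [exp_le_exp, inv_eq_one_div]
    gcongr
    nlinarith

theorem tendsto_sqrt_two_mul_floor_div_add_one :
    Tendsto (fun t : ℝ => √(2 * ⌊t⌋₊ / (t + 1))) atTop (𝓝 √2) := by
  have h : Tendsto (fun t : ℝ => 2 * (⌊t⌋₊ / t) * (1 + t⁻¹)⁻¹) atTop (𝓝 (2 * 1 * (1 + 0)⁻¹)) :=
    (tendsto_nat_floor_div_atTop.const_mul 2).mul
      ((tendsto_const_nhds.add tendsto_inv_atTop_zero).inv₀ (by norm_num))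
  rw [mul_one, add_zero, inv_one, mul_one] at h
  refine (continuous_sqrt.tendsto 2).comp (h.congr' ?_)
  filter_upwards [eventually_gt_atTop 0] with t ht
  field_simp

theorem gamma_stirling_limit :
    Tendsto (fun t : ℝ => Real.exp t * Real.Gamma (t + 1) / (t ^ t * Real.sqrt (t + 1)))
      atTop (nhds (Real.sqrt (2 * π))) := by
  have h := (((Stirling.tendsto_stirlingSeq_sqrt_pi.comp tendsto_nat_floor_atTop).mul
    tendsto_Gamma_div_factorial_floor_mul_rpow).mul tendsto_sqrt_two_mul_floor_div_add_one).mul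
    tendsto_exp_sub_floor_mul_floor_div_pow
  rw [mul_one, mul_one, ← sqrt_mul' _ zero_le_two, mul_comm π] at h
  refine h.congr' ?_
  filter_upwards [eventually_ge_atTop 1] with t ht
  exact (exp_mul_Gamma_div_rpow_mul_sqrt_eq (Nat.floor_pos.2 ht) (by linarith)).symm
end
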